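/- arXiv:2203.03419 — 6 statements merged into one kernel-verified Lean document; each statement's English description precedes it below -/
import Mathlib

section
/- For every integer n ≥ 2, every commutative ring R and every t ∈ R, the matrices T_1, …, T_{n−1} ∈ M_n(R) defined by T_i = I_{i−1} ⊕ [[0,1],[t,0]] ⊕ I_{n−i−1} satisfy the Artin braid relations: T_i T_j = T_j T_i whenever |i − j| ≥ 2, and T_i T_{i+1} T_i = T_{i+1} T_i T_{i+1} for 1 ≤ i ≤ n − 2. Moreover det T_i = −t, so if t is a unit of R then every T_i is invertible; hence σ_i ↦ T_i defines an n-dimensional representation TYM_n of the braid group B_n over the Laurent polynomial ring ℤ[t^{±1}]. -/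
open Matrix

/-- The Tong–Yang–Ma matrix: the identity matrix except for a 2×2 block `[[0,1],[t,0]]`
occupying rows and columns `k` and `k+1` (0-based indexing); this is `T_{k+1}` in 1-based
indexing. -/
def tymMat (R : Type) [CommRing R] (n : ℕ) (t : R) (k : ℕ) : Matrix (Fin n) (Fin n) R :=
  Matrix.of fun p q =>
    if (p : ℕ) = k ∧ (q : ℕ) = k + 1 then 1
    else if (p : ℕ) = k + 1 ∧ (q : ℕ) = k then t
    else if (p : ℕ) = (q : ℕ) ∧ (p : ℕ) ≠ k ∧ (p : ℕ) ≠ k + 1 then 1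
    else 0

/-- The Artin braid relators on `m` generators `σ_1, …, σ_m` (indexed by `Fin m`). -/
def braidRels (m : ℕ) : Set (FreeGroup (Fin m)) :=
  {r | (∃ i j : Fin m, (i : ℕ) + 2 ≤ (j : ℕ) ∧
          r = FreeGroup.of i * FreeGroup.of j * (FreeGroup.of i)⁻¹ * (FreeGroup.of j)⁻¹) ∨
       (∃ i j : Fin m, (j : ℕ) = (i : ℕ) + 1 ∧
          r = FreeGroup.of i * FreeGroup.of j * FreeGroup.of i *
              (FreeGroup.of j)⁻¹ * (FreeGroup.of i)⁻¹ * (FreeGroup.of j)⁻¹)}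

variable {R : Type} [CommRing R] {n : ℕ} {t : R} {k : ℕ}

lemma tym_mul_apply (hk : k + 1 < n) (M : Matrix (Fin n) (Fin n) R) (p q : Fin n) :
    (tymMat R n t k * M) p q =
      if (p : ℕ) = k then M ⟨k+1, hk⟩ q
      else if (p : ℕ) = k + 1 then t * M ⟨k, Nat.lt_of_succ_lt hk⟩ q
      else M p q := by
  rw [Matrix.mul_apply]
  by_cases h1 : (p : ℕ) = k
  · rw [if_pos h1, Finset.sum_eq_single (⟨k+1, hk⟩ : Fin n)]
    · simp [tymMat, h1]
    · intro b _ hb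
      have : (b : ℕ) ≠ k + 1 := fun h => hb (Fin.ext h)
      simp [tymMat, h1, this]
    · simp
  · by_cases h2 : (p : ℕ) = k + 1
    · rw [if_neg h1, if_pos h2, Finset.sum_eq_single (⟨k, Nat.lt_of_succ_lt hk⟩ : Fin n)]
      · simp [tymMat, h1, h2]
      · intro b _ hb
        have : (b : ℕ) ≠ k := fun h => hb (Fin.ext h)
        simp [tymMat, h1, h2, this]
      · simp
    · rw [if_neg h1, if_neg h2, Finset.sum_eq_single p]
      · simp [tymMat, h1, h2]
      · intro b _ hb
        have : (b : ℕ) ≠ (p : ℕ) := fun h => hb (Fin.ext h)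
        simp [tymMat, h1, h2]
        omega
      · simp

set_option maxHeartbeats 2000000 in
lemma tym_comm (hk : k + 1 < n) {l : ℕ} (hl : l + 1 < n) (h : k + 2 ≤ l) :
    tymMat R n t k * tymMat R n t l = tymMat R n t l * tymMat R n t k := by
  ext p q
  rw [tym_mul_apply hk, tym_mul_apply hl]
  simp only [tymMat, of_apply]
  split_ifs <;> first | rfl | omega | ring

set_option maxHeartbeats 4000000 in
lemma tym_braid (hk : k + 2 < n) :
    tymMat R n t k * tymMat R n t (k+1) * tymMat R n t k
      = tymMat R n t (k+1) * tymMat R n t k * tymMat R n t (k+1) := by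
  have hk1 : k + 1 < n := Nat.lt_of_succ_lt hk
  rw [mul_assoc, mul_assoc]
  ext p q
  simp only [tym_mul_apply hk1, tym_mul_apply hk]
  simp only [tymMat, of_apply, true_and, and_true, Fin.val_mk]
  split_ifs <;> first | rfl | omega | ring

lemma tym_eq_diag_mul_perm (hk : k + 1 < n) :
    tymMat R n t k =
      Matrix.diagonal (fun p : Fin n => if p = (⟨k+1, hk⟩ : Fin n) then t else 1) *
        Equiv.Perm.permMatrix R (Equiv.swap (⟨k, Nat.lt_of_succ_lt hk⟩ : Fin n) ⟨k+1, hk⟩) := by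
  ext p q
  rw [Matrix.diagonal_mul]
  simp only [tymMat, of_apply, Equiv.Perm.permMatrix, PEquiv.toMatrix_apply,
    Equiv.toPEquiv_apply, Option.mem_def, Option.some.injEq]
  by_cases h1 : (p : ℕ) = k
  · have hp : p = (⟨k, Nat.lt_of_succ_lt hk⟩ : Fin n) := Fin.ext h1
    subst hp
    simp [Equiv.swap_apply_left, Fin.ext_iff, eq_comm]
  · by_cases h2 : (p : ℕ) = k + 1
    · have hp : p = (⟨k+1, hk⟩ : Fin n) := Fin.ext h2
      subst hp
      simp [Equiv.swap_apply_right, Fin.ext_iff, eq_comm]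
    · have hs : Equiv.swap (⟨k, Nat.lt_of_succ_lt hk⟩ : Fin n) ⟨k+1, hk⟩ p = p :=
        Equiv.swap_apply_of_ne_of_ne (fun h => h1 (by simpa [Fin.ext_iff] using h))
          (fun h => h2 (by simpa [Fin.ext_iff] using h))
      have hp : p ≠ (⟨k+1, hk⟩ : Fin n) := fun h => h2 (by simpa [Fin.ext_iff] using h)
      simp [hs, hp, Fin.ext_iff, h1, h2, eq_comm]

lemma tym_det (hk : k + 1 < n) : (tymMat R n t k).det = -t := by
  rw [tym_eq_diag_mul_perm hk, Matrix.det_mul, Matrix.det_diagonal,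
    Matrix.det_permutation, Equiv.Perm.sign_swap (by simp [Fin.ext_iff]),
    Finset.prod_ite_eq' Finset.univ _ _]
  simp

lemma tym_isUnit (hk : k + 1 < n) (ht : IsUnit t) : IsUnit (tymMat R n t k) := by
  rw [Matrix.isUnit_iff_isUnit_det, tym_det hk]
  exact ht.neg

theorem tym_braid_relations_and_representation (n : ℕ) (hn : 2 ≤ n) :
    (∀ (R : Type) [CommRing R], ∀ t : R,
      (∀ i j : ℕ, 1 ≤ i → 1 ≤ j → i ≤ n - 1 → j ≤ n - 1 → (i + 2 ≤ j ∨ j + 2 ≤ i) →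
        tymMat R n t (i - 1) * tymMat R n t (j - 1)
          = tymMat R n t (j - 1) * tymMat R n t (i - 1)) ∧
      (∀ i : ℕ, 1 ≤ i → i ≤ n - 2 →
        tymMat R n t (i - 1) * tymMat R n t i * tymMat R n t (i - 1)
          = tymMat R n t i * tymMat R n t (i - 1) * tymMat R n t i) ∧
      (∀ i : ℕ, 1 ≤ i → i ≤ n - 1 → (tymMat R n t (i - 1)).det = -t) ∧
      (IsUnit t → ∀ i : ℕ, 1 ≤ i → i ≤ n - 1 → IsUnit (tymMat R n t (i - 1)))) ∧
    (∃ φ : PresentedGroup (braidRels (n - 1)) →*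
        Matrix.GeneralLinearGroup (Fin n) (LaurentPolynomial ℤ),
      ∀ i : Fin (n - 1),
        ((φ (PresentedGroup.of i) : Matrix (Fin n) (Fin n) (LaurentPolynomial ℤ)))
          = tymMat (LaurentPolynomial ℤ) n (LaurentPolynomial.T 1) (i : ℕ)) := by
  constructor
  · intro R _ t
    refine ⟨?_, ?_, ?_, ?_⟩
    · intro i j hi hj hin hjn hij
      rcases hij with h | h
      · exact tym_comm (by omega) (by omega) (by omega)
      · exact (tym_comm (by omega) (by omega) (by omega)).symm
    · intro i hi hin
      have h := tym_braid (R := R) (n := n) (t := t) (k := i - 1) (by omega)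
      rwa [show i - 1 + 1 = i by omega] at h
    · intro i hi hin
      exact tym_det (by omega)
    · intro ht i hi hin
      exact tym_isUnit (by omega) ht
  · set L := LaurentPolynomial ℤ
    set τ : L := LaurentPolynomial.T 1
    have hτ : IsUnit τ := LaurentPolynomial.isUnit_T 1
    have hlt : ∀ i : Fin (n - 1), (i : ℕ) + 1 < n := fun i => by omega
    set f : Fin (n - 1) → Matrix.GeneralLinearGroup (Fin n) L :=
      fun i => (tym_isUnit (hlt i) hτ).unit with hf
    have hfval : ∀ i : Fin (n - 1), (f i : Matrix (Fin n) (Fin n) L) = tymMat L n τ (i : ℕ) :=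
      fun i => IsUnit.unit_spec _
    have hrels : ∀ r ∈ braidRels (n - 1), FreeGroup.lift f r = 1 := by
      rintro r (⟨i, j, hij, rfl⟩ | ⟨i, j, hij, rfl⟩)
      · simp only [_root_.map_mul, _root_.map_inv, FreeGroup.lift_apply_of]
        have : f i * f j = f j * f i := by
          ext : 1
          push_cast
          rw [hfval, hfval]
          exact tym_comm (hlt i) (hlt j) hij
        rw [mul_inv_eq_one, mul_inv_eq_iff_eq_mul, this]
      · simp only [_root_.map_mul, _root_.map_inv, FreeGroup.lift_apply_of]
        have : f i * f j * f i = f j * f i * f j := by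
          ext : 1
          push_cast
          rw [hfval, hfval]
          have hj2 := j.isLt
          have h := tym_braid (R := L) (n := n) (t := τ) (k := (i : ℕ)) (by omega)
          rwa [← hij] at h
        rw [mul_inv_eq_one, mul_inv_eq_iff_eq_mul, mul_inv_eq_iff_eq_mul, this]
    refine ⟨PresentedGroup.toGroup hrels, fun i => ?_⟩
    rw [PresentedGroup.toGroup.of]
    exact hfval i
end

section
/- In the polynomial ring ℤ[t,z], with ρ_1 = [[0,1,0],[t,0,0],[0,0,1]] and ρ_2 = [[1,0,0],[0,0,1],[0,t,0]] the 3×3 Tong–Yang–Ma matrices of the generators of B_3, one has det(I_3 − z·ρ_2 + z²·ρ_1·ρ_2) = (1 + t z³)·(1 − z)·(1 − t z²). Since det(I_3 − z·ρ_2) = (1 − z)(1 − t z²), this says that the twisted Alexander invariant of the braid group B_3 associated with the Tong–Yang–Ma representation TYM_3 and the abelianization α(σ_i) = z equals 1 + t z³. -/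
open Matrix MvPolynomial

/-- The polynomial ring ℤ[t,z] in two commuting variables. -/
noncomputable abbrev Rtz : Type := MvPolynomial (Fin 2) ℤ

/-- The variable `t` of ℤ[t,z]. -/
noncomputable def tv : Rtz := MvPolynomial.X 0

/-- The variable `z` of ℤ[t,z]. -/
noncomputable def zv : Rtz := MvPolynomial.X 1

/-- The Tong–Yang–Ma matrix ρ₁ of the generator σ₁ of B₃. -/
noncomputable def ρ₁ : Matrix (Fin 3) (Fin 3) Rtz := !![0, 1, 0; tv, 0, 0; 0, 0, 1]

/-- The Tong–Yang–Ma matrix ρ₂ of the generator σ₂ of B₃. -/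
noncomputable def ρ₂ : Matrix (Fin 3) (Fin 3) Rtz := !![1, 0, 0; 0, 0, 1; 0, tv, 0]

theorem twisted_alexander_B3_TYM :
    (1 - zv • ρ₂ + zv ^ 2 • (ρ₁ * ρ₂)).det = (1 + tv * zv ^ 3) * (1 - zv) * (1 - tv * zv ^ 2) ∧
    (1 - zv • ρ₂).det = (1 - zv) * (1 - tv * zv ^ 2) := by
  constructor <;>
  · simp [ρ₁, ρ₂, Matrix.det_fin_three, Matrix.mul_apply, Fin.sum_univ_three,
      Matrix.one_apply, Matrix.vecHead, Matrix.vecTail]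
    ring
end

section
/- Let n ≥ 4. For every choice of (n−2)·n rows I of the Alexander matrix M_{n−1}, the polynomial (1 − z)^{n−2}·(1 − t z²) divides det M_{n−1}^I in ℤ[t,z]. -/
open Matrix MvPolynomial

/-- The Tong–Yang–Ma matrix ρ_i (1-based `i`, `1 ≤ i ≤ n-1`): the identity matrix except for a
2×2 block `[[0,1],[t,0]]` occupying rows and columns `i-1` and `i` (0-based indexing), i.e.
rows and columns `i` and `i+1` in 1-based indexing. -/
noncomputable def tymρ (n : ℕ) (i : ℕ) : Matrix (Fin n) (Fin n) Rtz :=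
  Matrix.of fun p q =>
    if (p : ℕ) + 1 = i ∧ (q : ℕ) = i then 1
    else if (p : ℕ) = i ∧ (q : ℕ) + 1 = i then tv
    else if (p : ℕ) = (q : ℕ) ∧ (p : ℕ) + 1 ≠ i ∧ (p : ℕ) ≠ i then 1
    else 0

/-- The `n × n` block of the Alexander matrix of the Artin presentation of `B_n` associated
with the Tong–Yang–Ma representation, in the row-block of the relation `[i,j]`
(`1 ≤ i < j ≤ n-1`, 1-based) and the column-block `c` (`1 ≤ c ≤ n-2`, 1-based). -/
noncomputable def alexBlock (n : ℕ) (i j c : ℕ) : Matrix (Fin n) (Fin n) Rtz :=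
  if j = i + 1 then
    if c = i then 1 - zv • tymρ n (i + 1) + zv ^ 2 • (tymρ n i * tymρ n (i + 1))
    else if c = i + 1 then zv • tymρ n i - zv ^ 2 • (tymρ n (i + 1) * tymρ n i) - 1
    else 0
  else
    if c = i then 1 - zv • tymρ n j
    else if c = j then zv • tymρ n i - 1
    else 0

/-- The row index set of the Alexander matrix `M_{n-1}`: a pair of a relation `[i,j]`
(`1 ≤ i < j ≤ n-1`, recorded 0-based as elements of `Fin (n-1)`) and a row `Fin n`
within the corresponding row-block. -/
def AlexRow (n : ℕ) : Type := {p : Fin (n - 1) × Fin (n - 1) // p.1 < p.2} × Fin n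

/-- The Alexander matrix `M_{n-1}` of the Artin presentation of the braid group `B_n`
associated with the Tong–Yang–Ma representation `σ_i ↦ ρ_i` and the abelianization
`σ_i ↦ z`, with the column-block corresponding to the generator `σ_{n-1}` removed.
Columns are indexed by pairs (column-block `Fin (n-2)` (0-based), column `Fin n` within
the block). -/
noncomputable def alexM (n : ℕ) : Matrix (AlexRow n) (Fin (n - 2) × Fin n) Rtz :=
  fun r c => alexBlock n ((r.1.1.1 : ℕ) + 1) ((r.1.1.2 : ℕ) + 1) ((c.1 : ℕ) + 1) r.2 c.2

/-!
The Tong–Yang–Ma matrices satisfy the braid relations, so the fundamental formula of Fox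
calculus gives `∑ c, M_{[i,j],c} (z ρ_c - 1) = 0`, summed over all `n - 1` column blocks. Hence
`M_{n-1}`, which lacks the block `c = n - 1`, maps the stacked blocks `z ρ_c - 1` to minus the
deleted block column times `z ρ_{n-1} - 1`. Column `q ≤ n - 3` of `z ρ_{n-1} - 1` is
`(z - 1) e_q`, and `z ρ_{n-1} - 1` kills `z e_{n-2} + e_{n-1}` modulo `1 - t z²`. This gives
`n - 2` vectors, triangular with unit pivots, that `M_{n-1}` maps into `(1 - z)`, and one vector
with pivot `z - 1` that it maps into `(1 - t z²)`. Column operations on a maximal minor then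
produce the factors `(1 - z)^{n-2}` and `1 - t z²`, which is prime and does not divide `1 - z`.
-/

namespace Matrix

variable {m R : Type*} [Fintype m] [DecidableEq m] [CommRing R]

theorem exists_det_mul_eq_mul_det_updateCol {p : R} (B : Matrix m m R) (j : m) {w : m → R}
    (hw : ∀ r, p ∣ (B *ᵥ w) r) : ∃ u : m → R, B.det * w j = p * (B.updateCol j u).det := by
  choose u hu using hw
  refine ⟨u, ?_⟩
  have hcol : (fun k => ∑ q, w q • B k q) = p • u := by
    funext k
    simp only [Pi.smul_apply, smul_eq_mul, ← hu k, mulVec, dotProduct, mul_comm]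
  rw [← det_updateCol_smul, ← hcol, det_updateCol_sum, smul_eq_mul, mul_comm]

theorem updateCol_mulVec_of_apply_eq_zero (B : Matrix m m R) {j : m} (u : m → R) {v : m → R}
    (hv : v j = 0) : B.updateCol j u *ᵥ v = B *ᵥ v := by
  funext r
  refine Finset.sum_congr rfl fun q _ => ?_
  rcases eq_or_ne q j with rfl | hq
  · simp [hv]
  · simp only [updateCol_ne hq]

theorem _root_.Prime.dvd_det_of_mulVec_dvd {p : R} (hp : Prime p) {B : Matrix m m R} {w : m → R}
    (j : m) (hj : ¬ p ∣ w j) (hw : ∀ r, p ∣ (B *ᵥ w) r) : p ∣ B.det := by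
  obtain ⟨u, hu⟩ := B.exists_det_mul_eq_mul_det_updateCol j hw
  exact (hp.dvd_or_dvd (hu ▸ dvd_mul_right p _)).resolve_right hj

/-- Column operations: `w j` turns column `j` into a multiple of `p` at the cost of the unit
`w j j`, and the vectors after `j` in `l` vanish at `j`, so they do not see the change. -/
theorem pow_length_dvd_det_of_mulVec_dvd (p : R) (w : m → m → R) :
    ∀ (l : List m) (B : Matrix m m R), (∀ j ∈ l, IsUnit (w j j)) →
      l.Pairwise (fun j j' => w j' j = 0) → (∀ j ∈ l, ∀ r, p ∣ (B *ᵥ w j) r) →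
      p ^ l.length ∣ B.det
  | [], _, _, _, _ => by simp
  | j :: l, B, hunit, htri, hker => by
    rw [List.pairwise_cons] at htri
    obtain ⟨u, hu⟩ := B.exists_det_mul_eq_mul_det_updateCol j (hker j List.mem_cons_self)
    have hrest : p ^ l.length ∣ (B.updateCol j u).det :=
      pow_length_dvd_det_of_mulVec_dvd p w l _ (fun j' hj' => hunit j' (List.mem_cons_of_mem _ hj'))
        htri.2 fun j' hj' => by
          rw [updateCol_mulVec_of_apply_eq_zero _ _ (htri.1 j' hj')]
          exact hker j' (List.mem_cons_of_mem _ hj')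
    rw [← (hunit j List.mem_cons_self).dvd_mul_right, hu, List.length_cons, pow_succ']
    exact mul_dvd_mul_left p hrest

end Matrix

theorem Matrix.ext_of_mulVec_comp_val {R : Type*} [NonAssocSemiring R] {m n : ℕ}
    {A B : Matrix (Fin m) (Fin n) R}
    (h : ∀ F : ℕ → R, A *ᵥ (F ∘ Fin.val) = B *ᵥ (F ∘ Fin.val)) : A = B := by
  refine ext_of_mulVec_single fun k => ?_
  have hk : Pi.single k 1 = (fun x : ℕ => if x = k then (1 : R) else 0) ∘ Fin.val := by
    funext x
    simp [Pi.single_apply, Fin.ext_iff]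
  rw [hk, h]

/-- `ρ_m` acting on vectors written as sequences `ℕ → Rtz`, which avoids arithmetic in `Fin n`. -/
noncomputable def tymρSeq (m : ℕ) (F : ℕ → Rtz) : ℕ → Rtz :=
  fun p => if p + 1 = m then F m else if p = m then tv * F (m - 1) else F p

theorem tymρ_mulVec {n m : ℕ} (hm : 1 ≤ m) (hmn : m ≤ n - 1) (F : ℕ → Rtz) :
    tymρ n m *ᵥ (F ∘ Fin.val) = tymρSeq m F ∘ Fin.val := by
  funext p
  set src := if (p : ℕ) + 1 = m then m else if (p : ℕ) = m then m - 1 else (p : ℕ) with hsrc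
  have hlt : src < n := by
    rw [hsrc]
    split_ifs <;> omega
  rw [mulVec, dotProduct, Fintype.sum_eq_single ⟨src, hlt⟩ fun q hq => ?_]
  · simp only [tymρ, tymρSeq, of_apply, Function.comp_apply, hsrc]
    split_ifs <;> first | omega | ring
  · have hq : (q : ℕ) ≠ src := fun h => hq (Fin.ext h)
    simp only [tymρ, of_apply, hsrc] at hq ⊢
    split_ifs at hq <;> split_ifs <;> first | omega | simp

theorem smul_tymρ_sub_one_mulVec {n m : ℕ} (hm : 1 ≤ m) (hmn : m ≤ n - 1) (F : ℕ → Rtz) :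
    (zv • tymρ n m - 1) *ᵥ (F ∘ Fin.val) = (fun p => zv * tymρSeq m F p - F p) ∘ Fin.val := by
  rw [sub_mulVec, smul_mulVec, one_mulVec, tymρ_mulVec hm hmn]
  rfl

theorem smul_tymρ_sub_one_mulVec_single {n m : ℕ} {q : Fin n} (hq : (q : ℕ) + 1 ≠ m)
    (hq' : (q : ℕ) ≠ m) : (zv • tymρ n m - 1) *ᵥ Pi.single q 1 = (zv - 1) • Pi.single q 1 := by
  funext p
  simp only [mulVec_single_one, col_apply, Matrix.sub_apply, Matrix.smul_apply, tymρ, of_apply,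
    one_apply, Pi.smul_apply, Pi.single_apply, Fin.ext_iff, smul_eq_mul]
  split_ifs <;> first | omega | ring

theorem tymρSeq_braid (k : ℕ) (F : ℕ → Rtz) :
    tymρSeq (k + 1) (tymρSeq (k + 2) (tymρSeq (k + 1) F))
      = tymρSeq (k + 2) (tymρSeq (k + 1) (tymρSeq (k + 2) F)) := by
  funext p
  simp only [tymρSeq, Nat.add_sub_cancel, Nat.add_succ_sub_one]
  split_ifs <;> first | omega | ring

theorem tymρSeq_comm {i j : ℕ} (hij : i + 2 ≤ j) (F : ℕ → Rtz) :
    tymρSeq i (tymρSeq j F) = tymρSeq j (tymρSeq i F) := by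
  funext p
  simp only [tymρSeq]
  split_ifs <;> first | omega | ring

theorem tymρ_braid {n i : ℕ} (hi : 1 ≤ i) (hin : i + 1 ≤ n - 1) :
    tymρ n i * tymρ n (i + 1) * tymρ n i = tymρ n (i + 1) * tymρ n i * tymρ n (i + 1) := by
  obtain ⟨k, rfl⟩ : ∃ k, i = k + 1 := ⟨i - 1, by omega⟩
  refine Matrix.ext_of_mulVec_comp_val fun F => ?_
  simp only [← mulVec_mulVec, tymρ_mulVec (n := n) hi (by omega),
    tymρ_mulVec (n := n) (by omega) hin]
  exact congrArg (· ∘ Fin.val) (tymρSeq_braid k F)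

theorem tymρ_comm {n i j : ℕ} (hi : 1 ≤ i) (hij : i + 2 ≤ j) (hj : j ≤ n - 1) :
    tymρ n i * tymρ n j = tymρ n j * tymρ n i := by
  refine Matrix.ext_of_mulVec_comp_val fun F => ?_
  simp only [← mulVec_mulVec, tymρ_mulVec (n := n) hi (by omega),
    tymρ_mulVec (n := n) (by omega) hj]
  exact congrArg (· ∘ Fin.val) (tymρSeq_comm hij F)

section FoxIdentities

variable {R S : Type*} [CommRing R] [Ring S] [Algebra R S]

theorem fox_formula_braid (z : R) {a b : S} (h : a * b * a = b * a * b) :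
    (1 - z • b + z ^ 2 • (a * b)) * (z • a - 1) + (z • a - z ^ 2 • (b * a) - 1) * (z • b - 1)
      = 0 := by
  have : (1 - z • b + z ^ 2 • (a * b)) * (z • a - 1) + (z • a - z ^ 2 • (b * a) - 1) * (z • b - 1)
      = z ^ 3 • (a * b * a - b * a * b) := by
    simp only [sub_mul, add_mul, mul_sub, one_mul, mul_one, smul_mul_assoc, mul_smul_comm,
      smul_sub, mul_assoc]
    module
  rw [this, h, sub_self, smul_zero]

theorem fox_formula_comm (z : R) {a b : S} (h : a * b = b * a) :
    (1 - z • b) * (z • a - 1) + (z • a - 1) * (z • b - 1) = 0 := by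
  have : (1 - z • b) * (z • a - 1) + (z • a - 1) * (z • b - 1) = z ^ 2 • (a * b - b * a) := by
    simp only [sub_mul, mul_sub, one_mul, mul_one, smul_mul_assoc, mul_smul_comm, smul_sub]
    module
  rw [this, h, sub_self, smul_zero]

end FoxIdentities

theorem alexBlock_eq_zero {n i j c : ℕ} (hci : c ≠ i) (hcj : c ≠ j) : alexBlock n i j c = 0 := by
  unfold alexBlock
  split_ifs <;> first | rfl | omega

/-- The fundamental formula of Fox calculus for the relation `[i,j]`. -/
theorem sum_alexBlock_mul_eq_zero {n i j : ℕ} (hi : 1 ≤ i) (hij : i < j) (hj : j ≤ n - 1) :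
    ∑ c ∈ Finset.range (n - 1), alexBlock n i j (c + 1) * (zv • tymρ n (c + 1) - 1) = 0 := by
  rw [Finset.sum_eq_add_of_mem (i - 1) (j - 1) (by simp; omega) (by simp; omega) (by omega)
    fun c _ hc => by rw [alexBlock_eq_zero (by omega) (by omega), zero_mul],
    Nat.sub_add_cancel hi, Nat.sub_add_cancel (by omega : 1 ≤ j)]
  by_cases hbraid : j = i + 1
  · subst hbraid
    simp only [alexBlock, if_pos, if_neg (by omega : i + 1 ≠ i)]
    exact fox_formula_braid zv (tymρ_braid hi hj)
  · simp only [alexBlock, if_neg hbraid, if_pos, if_neg (by omega : j ≠ i)]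
    exact fox_formula_comm zv (tymρ_comm hi (by omega) hj)

theorem sum_fin_alexBlock_mul_eq_neg {n i j : ℕ} (hi : 1 ≤ i) (hij : i < j) (hj : j ≤ n - 1) :
    ∑ b : Fin (n - 2), alexBlock n i j (b + 1) * (zv • tymρ n (b + 1) - 1)
      = -(alexBlock n i j (n - 1) * (zv • tymρ n (n - 1) - 1)) := by
  have hfox := sum_alexBlock_mul_eq_zero hi hij hj
  rw [show n - 1 = n - 2 + 1 by omega, Finset.sum_range_succ, show n - 2 + 1 = n - 1 by omega,
    add_eq_zero_iff_eq_neg] at hfox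
  rw [Fin.sum_univ_eq_sum_range (fun b => alexBlock n i j (b + 1) * (zv • tymρ n (b + 1) - 1)),
    hfox]

noncomputable def foxStack (n : ℕ) : Matrix (Fin (n - 2) × Fin n) (Fin n) Rtz :=
  of fun c q => (zv • tymρ n ((c.1 : ℕ) + 1) - 1) c.2 q

theorem foxStack_mulVec_apply {n : ℕ} (y : Fin n → Rtz) (c : Fin (n - 2) × Fin n) :
    (foxStack n *ᵥ y) c = ((zv • tymρ n ((c.1 : ℕ) + 1) - 1) *ᵥ y) c.2 :=
  rfl

theorem foxStack_apply_diag {n : ℕ} (b : Fin (n - 2)) (q : Fin n) :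
    foxStack n (b, Fin.castLE (Nat.sub_le n 2) b) q
      = if (q : ℕ) = b + 1 then zv else if (q : ℕ) = b then -1 else 0 := by
  simp only [foxStack, of_apply, Matrix.sub_apply, Matrix.smul_apply, tymρ, one_apply,
    Fin.ext_iff, Fin.val_castLE, smul_eq_mul, true_and]
  split_ifs <;> first | omega | ring

theorem alexM_mul_foxStack {n : ℕ} (r : AlexRow n) (q : Fin n) :
    (alexM n * foxStack n) r q
      = -(alexBlock n (r.1.1.1 + 1) (r.1.1.2 + 1) (n - 1) * (zv • tymρ n (n - 1) - 1)) r.2 q := by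
  have h := congrArg (· r.2 q) (sum_fin_alexBlock_mul_eq_neg (Nat.le_add_left 1 _)
    (Nat.add_lt_add_right (show (r.1.1.1 : ℕ) < r.1.1.2 from r.1.2) 1) r.1.1.2.isLt)
  simp only [Matrix.sum_apply, Matrix.neg_apply] at h
  rw [← h]
  simp only [mul_apply, Fintype.sum_prod_type]
  rfl

theorem dvd_alexM_mulVec_foxStack_mulVec {n : ℕ} {d : Rtz} {y : Fin n → Rtz}
    (hy : ∀ p, d ∣ ((zv • tymρ n (n - 1) - 1) *ᵥ y) p) (r : AlexRow n) :
    d ∣ (alexM n *ᵥ (foxStack n *ᵥ y)) r := by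
  set N := alexBlock n (r.1.1.1 + 1) (r.1.1.2 + 1) (n - 1) * (zv • tymρ n (n - 1) - 1)
  have h : (alexM n *ᵥ (foxStack n *ᵥ y)) r = -(N *ᵥ y) r.2 := by
    rw [mulVec_mulVec]
    simp only [mulVec, dotProduct, alexM_mul_foxStack, neg_mul, Finset.sum_neg_distrib, N]
  rw [h, ← mulVec_mulVec, dvd_neg]
  simp only [mulVec, dotProduct]
  exact Finset.dvd_sum fun p _ => dvd_mul_of_dvd_right (hy p) _

theorem one_sub_zv_pow_dvd_det (n : ℕ) (f : Fin (n - 2) × Fin n → AlexRow n) :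
    (1 - zv) ^ (n - 2) ∣ ((alexM n).submatrix f id).det := by
  let diag (b : Fin (n - 2)) : Fin (n - 2) × Fin n := (b, Fin.castLE (Nat.sub_le n 2) b)
  have hcol (q : Fin n) (c) : (foxStack n *ᵥ Pi.single q 1) c = foxStack n c q := by
    rw [mulVec_single_one, col_apply]
  have h := pow_length_dvd_det_of_mulVec_dvd (1 - zv) (fun j => foxStack n *ᵥ Pi.single j.2 1)
    ((List.finRange (n - 2)).reverse.map diag) ((alexM n).submatrix f id) ?unit ?triangular ?ker
  · simpa using h
  case unit =>
    simp only [List.mem_map, List.mem_reverse, List.mem_finRange, true_and, forall_exists_index,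
      forall_apply_eq_imp_iff, hcol, diag, foxStack_apply_diag]
    simp
  case triangular =>
    rw [List.pairwise_map, List.pairwise_reverse]
    refine (List.pairwise_lt_finRange _).imp fun {a b} hab => ?_
    have hab : (a : ℕ) < b := hab
    simp only [hcol, diag, foxStack_apply_diag, Fin.val_castLE]
    split_ifs <;> first | omega | rfl
  case ker =>
    rintro _ hj r
    obtain ⟨b, -, rfl⟩ := List.mem_map.1 hj
    refine dvd_alexM_mulVec_foxStack_mulVec (fun p => ?_) (f r)
    have hb := b.isLt
    rw [smul_tymρ_sub_one_mulVec_single (by simp [diag]; omega) (by simp [diag]; omega),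
      Pi.smul_apply, smul_eq_mul]
    exact dvd_mul_of_dvd_left (dvd_sub_comm.1 dvd_rfl) _

theorem prime_one_sub_tv_mul_zv_sq : Prime (1 - tv * zv ^ 2) := by
  have hirr : Irreducible (Polynomial.C (-(X 0 ^ 2) : MvPolynomial (Fin 1) ℤ) * Polynomial.X
      + Polynomial.C 1) :=
    Polynomial.irreducible_C_mul_X_add_C (neg_ne_zero.2 (pow_ne_zero _ (X_ne_zero 0)))
      isRelPrime_one_right
  have himg : finSuccEquiv ℤ 1 (1 - tv * zv ^ 2)
      = Polynomial.C (-(X 0 ^ 2)) * Polynomial.X + Polynomial.C 1 := by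
    rw [tv, zv, ← Fin.succ_zero_eq_one]
    simp only [map_sub, map_one, map_mul, map_pow, finSuccEquiv_X_zero, finSuccEquiv_X_succ,
      map_neg]
    ring
  rw [← MulEquiv.prime_iff (finSuccEquiv ℤ 1).toMulEquiv]
  exact UniqueFactorizationMonoid.irreducible_iff_prime.1 (himg ▸ hirr)

/-- At `t = 1, z = -1` the first polynomial vanishes and the second does not. -/
theorem not_one_sub_tv_mul_zv_sq_dvd_one_sub_zv : ¬ (1 - tv * zv ^ 2) ∣ (1 - zv) := by
  rintro ⟨c, hc⟩
  have := congrArg (eval fun i : Fin 2 => if i = 0 then (1 : ℤ) else -1) hc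
  simp [tv, zv] at this

theorem one_sub_tv_mul_zv_sq_dvd_det {n : ℕ} (hn : 3 ≤ n) (f : Fin (n - 2) × Fin n → AlexRow n) :
    (1 - tv * zv ^ 2) ∣ ((alexM n).submatrix f id).det := by
  let Y : ℕ → Rtz := fun x => if x = n - 2 then zv else if x = n - 1 then 1 else 0
  refine prime_one_sub_tv_mul_zv_sq.dvd_det_of_mulVec_dvd (w := foxStack n *ᵥ (Y ∘ Fin.val))
    (⟨n - 3, by omega⟩, ⟨n - 1, by omega⟩) ?pivot
    fun r => dvd_alexM_mulVec_foxStack_mulVec (fun p => ?ker) (f r)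
  case pivot =>
    have : (foxStack n *ᵥ (Y ∘ Fin.val)) (⟨n - 3, by omega⟩, ⟨n - 1, by omega⟩) = zv - 1 := by
      rw [foxStack_mulVec_apply, smul_tymρ_sub_one_mulVec (by omega) (by omega)]
      simp only [Function.comp_apply, tymρSeq, Y, ↓reduceIte]
      split_ifs <;> first | omega | ring
    rw [this]
    exact fun h => not_one_sub_tv_mul_zv_sq_dvd_one_sub_zv (dvd_sub_comm.1 h)
  case ker =>
    rw [smul_tymρ_sub_one_mulVec (by omega) le_rfl]
    refine ⟨if (p : ℕ) = n - 1 then -1 else 0, ?_⟩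
    simp only [Function.comp_apply, tymρSeq, Y, ↓reduceIte]
    split_ifs <;> first | omega | ring

/-- For `n ≥ 4`, the polynomial `(1-z)^{n-2}·(1-tz²)` divides every maximal minor of the
Alexander matrix `M_{n-1}` (i.e. the determinant of every square submatrix obtained by
choosing `(n-2)·n` of its rows). -/
theorem common_divisor_of_maximal_minors (n : ℕ) (hn : 4 ≤ n) :
    ∀ f : Fin (n - 2) × Fin n → AlexRow n, Function.Injective f →
      (1 - zv) ^ (n - 2) * (1 - tv * zv ^ 2) ∣ ((alexM n).submatrix f id).det := by
  intro f _
  obtain ⟨E, hE⟩ := one_sub_zv_pow_dvd_det n f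
  have hp := prime_one_sub_tv_mul_zv_sq
  have hpE : 1 - tv * zv ^ 2 ∣ E :=
    (hp.dvd_or_dvd (hE ▸ one_sub_tv_mul_zv_sq_dvd_det (by omega) f)).resolve_left
      fun h => not_one_sub_tv_mul_zv_sq_dvd_one_sub_zv (hp.dvd_of_dvd_pow h)
  rw [hE]
  exact mul_dvd_mul_left _ hpE
end

section
/- Let n ≥ 4 and let I be the set of all rows of the n−2 row-blocks [1,2], [2,3], …, [n−2,n−1] of the Alexander matrix M_{n−1}. Then det M_{n−1}^I = ((1 − z)·(1 − t z²)·(1 + t z³))^{n−2}·(1 − z + z²)^{(n−3)(n−2)} in ℤ[t,z]. -/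
/-!
Row-block `[i, i+1]` has nonzero blocks only in column-blocks `i` and `i+1`, so the minor is
block upper triangular and its determinant is the product of the diagonal blocks
`I - z ρ_{i+1} + z² ρ_i ρ_{i+1}`. Both `ρ_i` and `ρ_{i+1}` are the identity away from the three
coordinates `i, i+1, i+2`, so such a block is `1 - z + z²` times the identity there, while on
those three coordinates it is a `3 × 3` matrix of determinant `(1 - z)(1 - t z²)(1 + t z³)`.
-/

open Matrix MvPolynomial

noncomputable section

section sumComplEquiv

variable {m ι : Type*} [Fintype m] [DecidableEq ι]

def Function.Embedding.sumComplEquiv (e : m ↪ ι) : m ⊕ ↥(Set.range e)ᶜ ≃ ι :=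
  (Equiv.sumCongr (Equiv.ofInjective e e.injective) (Equiv.refl _)).trans (Equiv.Set.sumCompl _)

@[simp]
theorem Function.Embedding.sumComplEquiv_inl (e : m ↪ ι) (a : m) :
    e.sumComplEquiv (.inl a) = e a := rfl

@[simp]
theorem Function.Embedding.sumComplEquiv_inr (e : m ↪ ι) (i : ↥(Set.range e)ᶜ) :
    e.sumComplEquiv (.inr i) = i := rfl

end sumComplEquiv

namespace Matrix

variable (R : Type*) [CommRing R]

def fromBlocksDiagAlgHom (m n : Type*) [Fintype m] [Fintype n] [DecidableEq m] [DecidableEq n] :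
    Matrix m m R × Matrix n n R →ₐ[R] Matrix (m ⊕ n) (m ⊕ n) R where
  toFun p := fromBlocks p.1 0 0 p.2
  map_one' := fromBlocks_one
  map_mul' p q := by simp [fromBlocks_multiply]
  map_zero' := fromBlocks_zero
  map_add' p q := by simp [fromBlocks_add]
  commutes' r := by simp [Algebra.algebraMap_eq_smul_one, ← fromBlocks_one, fromBlocks_smul]

variable {m ι : Type*} [Fintype m] [Fintype ι] [DecidableEq m] [DecidableEq ι]

def extendByScalar (e : m ↪ ι) : Matrix m m R × R →ₐ[R] Matrix ι ι R :=
  ((reindexAlgEquiv R R e.sumComplEquiv).toAlgHom.comp (fromBlocksDiagAlgHom R _ _)).comp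
    ((AlgHom.id R _).prodMap (Algebra.ofId R _))

variable {R}

theorem extendByScalar_apply (e : m ↪ ι) (p : Matrix m m R × R) :
    extendByScalar R e p =
      reindex e.sumComplEquiv e.sumComplEquiv (fromBlocks p.1 0 0 (scalar _ p.2)) := rfl

theorem det_extendByScalar (e : m ↪ ι) (p : Matrix m m R × R) :
    (extendByScalar R e p).det = p.1.det * p.2 ^ (Fintype.card ι - Fintype.card m) := by
  rw [extendByScalar_apply, det_reindex_self, det_fromBlocks_zero₂₁, scalar_apply, det_diagonal,
    Finset.prod_const, Finset.card_univ, Fintype.card_compl_set, Fintype.card_range]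

theorem eq_extendByScalar {e : m ↪ ι} {M : Matrix ι ι R} {B : Matrix m m R} {c : R}
    (h_range : ∀ a b, M (e a) (e b) = B a b)
    (h_compl : ∀ i j, i ∉ Set.range e ∨ j ∉ Set.range e → M i j = if i = j then c else 0) :
    M = extendByScalar R e (B, c) := by
  rw [extendByScalar_apply, ← (reindex e.sumComplEquiv e.sumComplEquiv).apply_symm_apply M]
  congr 1
  ext (a | ⟨i, hi⟩) (b | ⟨j, hj⟩)
  · exact h_range a b
  · have hne : e a ≠ j := ne_of_mem_of_not_mem (Set.mem_range_self a) hj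
    simp [h_compl _ _ (Or.inr hj), hne]
  · have hne : i ≠ e b := (ne_of_mem_of_not_mem (Set.mem_range_self b) hi).symm
    simp [h_compl _ _ (Or.inl hi), hne]
  · simp [h_compl _ _ (Or.inl hi), diagonal_apply]

end Matrix

def Fin.windowEmb {n : ℕ} (k : ℕ) (h : k + 3 ≤ n) : Fin 3 ↪ Fin n :=
  (Fin.natAddEmb k).trans (Fin.castLEEmb h)

@[simp]
theorem Fin.val_windowEmb {n k : ℕ} (h : k + 3 ≤ n) (j : Fin 3) :
    (Fin.windowEmb k h j : ℕ) = k + j := rfl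

theorem Fin.mem_range_windowEmb {n k : ℕ} (h : k + 3 ≤ n) (i : Fin n) :
    i ∈ Set.range (Fin.windowEmb k h) ↔ k ≤ i ∧ (i : ℕ) < k + 3 := by
  constructor
  · rintro ⟨j, rfl⟩
    simp only [Fin.val_windowEmb]
    omega
  · intro hi
    exact ⟨⟨i - k, by omega⟩, Fin.ext (by simp only [Fin.val_windowEmb]; omega)⟩

theorem tymρ_apply_of_not_mem_range_windowEmb {n k l : ℕ} (h : k + 3 ≤ n)
    (hl : k < l ∧ l ≤ k + 2) (i j : Fin n)
    (hij : i ∉ Set.range (Fin.windowEmb k h) ∨ j ∉ Set.range (Fin.windowEmb k h)) :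
    tymρ n l i j = if i = j then 1 else 0 := by
  simp only [Fin.mem_range_windowEmb] at hij
  simp only [tymρ, of_apply, Fin.ext_iff]
  split_ifs <;> first | rfl | omega

theorem tymρ_succ_eq_extendByScalar {n k : ℕ} (h : k + 3 ≤ n) :
    tymρ n (k + 1) = extendByScalar Rtz (Fin.windowEmb k h) (!![0, 1, 0; tv, 0, 0; 0, 0, 1], 1) :=
  eq_extendByScalar (fun a b => by fin_cases a <;> fin_cases b <;> simp [tymρ])
    (tymρ_apply_of_not_mem_range_windowEmb h (by omega))

theorem tymρ_add_two_eq_extendByScalar {n k : ℕ} (h : k + 3 ≤ n) :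
    tymρ n (k + 2) = extendByScalar Rtz (Fin.windowEmb k h) (!![1, 0, 0; 0, 0, 1; 0, tv, 0], 1) :=
  eq_extendByScalar (fun a b => by fin_cases a <;> fin_cases b <;> simp [tymρ])
    (tymρ_apply_of_not_mem_range_windowEmb h (by omega))

theorem Matrix.BlockTriangular.det_eq_prod_fst {α β R : Type*} [CommRing R] [LinearOrder α]
    [Fintype α] [Fintype β] [DecidableEq α] [DecidableEq β] {M : Matrix (α × β) (α × β) R}
    (h : M.BlockTriangular Prod.fst) : M.det = ∏ a, (M.submatrix (Prod.mk a) (Prod.mk a)).det := by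
  rw [h.det_fintype]
  refine Finset.prod_congr rfl fun a _ => ?_
  let slice : β ≃ {p : α × β // p.1 = a} :=
    { toFun := fun b => ⟨(a, b), rfl⟩
      invFun := fun p => p.1.2
      left_inv := fun _ => rfl
      right_inv := by rintro ⟨⟨_, _⟩, rfl⟩; rfl }
  rw [← det_submatrix_equiv_self slice]
  rfl

theorem alexBlock_adjacent_of_lt {n i c : ℕ} (h : c < i) : alexBlock n i (i + 1) c = 0 := by
  rw [alexBlock, if_pos rfl, if_neg h.ne, if_neg (by omega)]

theorem det_alexBlock_adjacent_diag {n k : ℕ} (h : k + 3 ≤ n) :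
    (alexBlock n (k + 1) (k + 2) (k + 1)).det =
      (1 - zv) * (1 - tv * zv ^ 2) * (1 + tv * zv ^ 3) * (1 - zv + zv ^ 2) ^ (n - 3) := by
  have h_block : alexBlock n (k + 1) (k + 2) (k + 1) =
      extendByScalar Rtz (Fin.windowEmb k h)
        (1 - zv • (!![1, 0, 0; 0, 0, 1; 0, tv, 0], 1) +
          zv ^ 2 • ((!![0, 1, 0; tv, 0, 0; 0, 0, 1], 1) * (!![1, 0, 0; 0, 0, 1; 0, tv, 0], 1))) := by
    rw [alexBlock, if_pos rfl, if_pos rfl, tymρ_succ_eq_extendByScalar h,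
      tymρ_add_two_eq_extendByScalar h]
    simp only [map_add, map_sub, map_smul, map_mul, map_one]
  rw [h_block, det_extendByScalar, Fintype.card_fin, Fintype.card_fin]
  congr 1
  · rw [det_fin_three]
    simp
    ring
  · simp

end

/-- Lemma 4.3 (i): choosing the rows of the `n-2` row-blocks `[1,2], [2,3], …, [n-2,n-1]`
of the Alexander matrix `M_{n-1}`, the resulting maximal minor equals
`((1-z)(1-tz²)(1+tz³))^{n-2}·(1-z+z²)^{(n-3)(n-2)}`. -/
theorem det_minor_adjacent_blocks (n : ℕ) :
    (((alexM n).submatrix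
        (fun p : Fin (n - 2) × Fin n =>
          ((⟨(⟨(p.1 : ℕ), by omega⟩, ⟨(p.1 : ℕ) + 1, by omega⟩),
              Fin.mk_lt_mk.mpr (Nat.lt_succ_self _)⟩, p.2) : AlexRow n))
        id).det)
      = ((1 - zv) * (1 - tv * zv ^ 2) * (1 + tv * zv ^ 3)) ^ (n - 2)
        * (1 - zv + zv ^ 2) ^ ((n - 3) * (n - 2)) := by
  calc _ = ∏ a : Fin (n - 2), (alexBlock n (a + 1) (a + 2) (a + 1)).det :=
        Matrix.BlockTriangular.det_eq_prod_fst fun r c hlt => by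
          show alexBlock n (r.1 + 1) (r.1 + 1 + 1) (c.1 + 1) r.2 c.2 = 0
          rw [alexBlock_adjacent_of_lt (Nat.succ_lt_succ hlt)]
          rfl
    _ = _ := by
      rw [Finset.prod_congr rfl fun a _ => det_alexBlock_adjacent_diag (by omega), Finset.prod_const,
        Finset.card_univ, Fintype.card_fin, mul_pow, ← pow_mul]
end

section
/- Let n ≥ 5. In the polynomial ring ℤ[t,z], every common divisor of the three polynomials (1 − t z²)^{n−3}·(1 + t z³)^{n−2}·(1 − z + z²)^{(n−3)(n−2)}, (1 − t z²)^{n−3}·(1 − z)^{(n−3)(n−2)}, and (1 + t z³)·(1 − z + z²)^{n−2}·(1 − z)^{(n−4)(n−1)+1} is a unit (i.e. ±1); equivalently, the greatest common divisor of these three polynomials is 1. -/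
open MvPolynomial

/-!
Write `f = 1 - tz²`, `g = 1 + tz³`, `h = 1 - z + z²`, `k = 1 - z`. The ideals `(f, g)`, `(f, h)`,
`(f, k)`, `(g, k)` each contain a polynomial in `z` alone and a polynomial in `t` alone, both with
constant term `1`; a common divisor of two such polynomials involves neither variable, so it is a
unit. Hence these pairs, and `(h, k)` (as `1 = h + z k`), are relatively prime. Then `g^b h^c` is
prime to the second polynomial `f^a k^d`, so a common divisor of the first two divides `f^a`, which
is prime to the third polynomial `g h^c' k^e`.
-/

theorem IsRelPrime.of_mem_span_pair {R : Type*} [CommSemiring R] {a b u v : R}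
    (h : IsRelPrime u v) (hu : u ∈ Ideal.span {a, b}) (hv : v ∈ Ideal.span {a, b}) :
    IsRelPrime a b := by
  intro d hda hdb
  have hspan : Ideal.span {a, b} ≤ Ideal.span {d} := by
    simp [Ideal.span_le, Set.insert_subset_iff, Ideal.mem_span_singleton, hda, hdb]
  exact h (Ideal.mem_span_singleton.1 (hspan hu)) (Ideal.mem_span_singleton.1 (hspan hv))

namespace MvPolynomial

variable {σ R : Type*} [CommSemiring R] [NoZeroDivisors R]

theorem vars_subset_of_dvd {d p : MvPolynomial σ R} (hp : p ≠ 0) (hdp : d ∣ p) :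
    d.vars ⊆ p.vars := by
  obtain ⟨e, rfl⟩ := hdp
  intro i hi
  rw [mem_vars_iff_degreeOf_ne_zero] at hi ⊢
  rw [degreeOf_mul_eq (left_ne_zero_of_mul hp) (right_ne_zero_of_mul hp)]
  omega

theorem isRelPrime_of_mem_supported_of_disjoint [Nontrivial R] {s t : Set σ}
    {p q : MvPolynomial σ R} (hp : p ∈ supported R s) (hq : q ∈ supported R t)
    (hst : Disjoint s t) (hp1 : IsUnit (constantCoeff p)) (hq0 : q ≠ 0) : IsRelPrime p q := by
  intro d hdp hdq
  have hp0 : p ≠ 0 := by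
    rintro rfl
    simp at hp1
  rw [mem_supported] at hp hq
  have hd : d.vars = ∅ := Finset.eq_empty_of_forall_notMem fun i hi ↦
    Set.disjoint_left.1 hst (hp (vars_subset_of_dvd hp0 hdp hi))
      (hq (vars_subset_of_dvd hq0 hdq hi))
  rw [vars_eq_empty_iff_eq_C] at hd
  rw [hd] at hdp ⊢
  have hcoeff : coeff 0 d ∣ constantCoeff p := by simpa using map_dvd constantCoeff hdp
  exact (isUnit_of_dvd_unit hcoeff hp1).map C

theorem eq_one_or_eq_neg_one_of_isUnit {p : MvPolynomial σ ℤ} (hp : IsUnit p) :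
    p = 1 ∨ p = -1 := by
  obtain ⟨r, hr, rfl⟩ := isUnit_iff_eq_C_of_isReduced.1 hp
  rcases Int.isUnit_iff.1 hr with rfl | rfl <;> simp

end MvPolynomial

theorem isRelPrime_of_mem_supported_z_t {P Q : Rtz} (hP : P ∈ supported ℤ {1})
    (hQ : Q ∈ supported ℤ {0}) (hP1 : constantCoeff P = 1) (hQ1 : constantCoeff Q = 1) :
    IsRelPrime P Q :=
  isRelPrime_of_mem_supported_of_disjoint hP hQ (by simp) (by simp [hP1])
    (ne_zero_of_map (f := constantCoeff) (by simp [hQ1]))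

theorem isRelPrime_one_sub_tz2_one_add_tz3 :
    IsRelPrime (1 - tv * zv ^ 2) (1 + tv * zv ^ 3) := by
  refine .of_mem_span_pair (u := 1 + zv) (v := 1 - tv) ?_
    (Ideal.mem_span_pair.2 ⟨zv, 1, by ring⟩)
    (Ideal.mem_span_pair.2 ⟨1 - tv * zv * (1 - zv), -(tv * (1 - zv)), by ring⟩)
  refine isRelPrime_of_mem_supported_z_t ?_ ?_ (by simp [zv]) (by simp [tv]) <;>
    apply_rules [add_mem, sub_mem, pow_mem, one_mem, X_mem_supported.2, Set.mem_singleton]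

theorem isRelPrime_one_sub_tz2_one_sub_z_add_z2 :
    IsRelPrime (1 - tv * zv ^ 2) (1 - zv + zv ^ 2) := by
  refine .of_mem_span_pair (u := 1 - zv + zv ^ 2) (v := 1 + tv + tv ^ 2) ?_
    (Ideal.mem_span_pair.2 ⟨0, 1, by ring⟩)
    (Ideal.mem_span_pair.2 ⟨1 + tv * zv, tv ^ 2 + tv * (1 + tv * zv), by ring⟩)
  refine isRelPrime_of_mem_supported_z_t ?_ ?_ (by simp [zv]) (by simp [tv]) <;>
    apply_rules [add_mem, sub_mem, pow_mem, one_mem, X_mem_supported.2, Set.mem_singleton]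

theorem isRelPrime_one_sub_tz2_one_sub_z : IsRelPrime (1 - tv * zv ^ 2) (1 - zv) := by
  refine .of_mem_span_pair (u := 1 - zv) (v := 1 - tv) ?_
    (Ideal.mem_span_pair.2 ⟨0, 1, by ring⟩)
    (Ideal.mem_span_pair.2 ⟨1, -(tv * (1 + zv)), by ring⟩)
  refine isRelPrime_of_mem_supported_z_t ?_ ?_ (by simp [zv]) (by simp [tv]) <;>
    apply_rules [add_mem, sub_mem, pow_mem, one_mem, X_mem_supported.2, Set.mem_singleton]

theorem isRelPrime_one_add_tz3_one_sub_z : IsRelPrime (1 + tv * zv ^ 3) (1 - zv) := by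
  refine .of_mem_span_pair (u := 1 - zv) (v := 1 + tv) ?_
    (Ideal.mem_span_pair.2 ⟨0, 1, by ring⟩)
    (Ideal.mem_span_pair.2 ⟨1, tv * (1 + zv + zv ^ 2), by ring⟩)
  refine isRelPrime_of_mem_supported_z_t ?_ ?_ (by simp [zv]) (by simp [tv]) <;>
    apply_rules [add_mem, sub_mem, pow_mem, one_mem, X_mem_supported.2, Set.mem_singleton]

theorem isCoprime_one_sub_z_add_z2_one_sub_z : IsCoprime (1 - zv + zv ^ 2 : Rtz) (1 - zv) :=
  ⟨1, zv, by ring⟩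

theorem gcd_three_quotients_is_one_general (n : ℕ) :
    ∀ p : Rtz,
      p ∣ (1 - tv * zv ^ 2) ^ (n - 3) * (1 + tv * zv ^ 3) ^ (n - 2)
            * (1 - zv + zv ^ 2) ^ ((n - 3) * (n - 2)) →
      p ∣ (1 - tv * zv ^ 2) ^ (n - 3) * (1 - zv) ^ ((n - 3) * (n - 2)) →
      p ∣ (1 + tv * zv ^ 3) * (1 - zv + zv ^ 2) ^ (n - 2)
            * (1 - zv) ^ ((n - 4) * (n - 1) + 1) →
      p = 1 ∨ p = -1 := by
  intro p hpA hpB hpC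
  have hfg := isRelPrime_one_sub_tz2_one_add_tz3
  have hfh := isRelPrime_one_sub_tz2_one_sub_z_add_z2
  have hfk := isRelPrime_one_sub_tz2_one_sub_z
  have hgk := isRelPrime_one_add_tz3_one_sub_z
  have hhk := isCoprime_one_sub_z_add_z2_one_sub_z.isRelPrime
  set f : Rtz := 1 - tv * zv ^ 2
  set g : Rtz := 1 + tv * zv ^ 3
  set h : Rtz := 1 - zv + zv ^ 2
  set k : Rtz := 1 - zv
  have hB : IsRelPrime (g ^ (n - 2) * h ^ ((n - 3) * (n - 2)))
      (f ^ (n - 3) * k ^ ((n - 3) * (n - 2))) :=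
    (hfg.symm.pow_right.mul_right hgk.pow_right).pow_left.mul_left
      (hfh.symm.pow_right.mul_right hhk.pow_right).pow_left
  have hpf : p ∣ f ^ (n - 3) := by
    rw [mul_assoc] at hpA
    exact (hB.symm.of_dvd_left hpB).dvd_of_dvd_mul_right hpA
  have hC : IsRelPrime (f ^ (n - 3)) (g * h ^ (n - 2) * k ^ ((n - 4) * (n - 1) + 1)) :=
    ((hfg.mul_right hfh.pow_right).mul_right hfk.pow_right).pow_left
  exact eq_one_or_eq_neg_one_of_isUnit (hC hpf hpC)

/-- For `n ≥ 5`, every common divisor in ℤ[t,z] of the three polynomials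
`(1-tz²)^{n-3}·(1+tz³)^{n-2}·(1-z+z²)^{(n-3)(n-2)}`, `(1-tz²)^{n-3}·(1-z)^{(n-3)(n-2)}` and
`(1+tz³)·(1-z+z²)^{n-2}·(1-z)^{(n-4)(n-1)+1}` is a unit, i.e. equals `±1`; equivalently,
the greatest common divisor of these three polynomials is `1`. -/
theorem gcd_three_quotients_is_one (n : ℕ) (hn : 5 ≤ n) :
    ∀ p : Rtz,
      p ∣ (1 - tv * zv ^ 2) ^ (n - 3) * (1 + tv * zv ^ 3) ^ (n - 2)
            * (1 - zv + zv ^ 2) ^ ((n - 3) * (n - 2)) →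
      p ∣ (1 - tv * zv ^ 2) ^ (n - 3) * (1 - zv) ^ ((n - 3) * (n - 2)) →
      p ∣ (1 + tv * zv ^ 3) * (1 - zv + zv ^ 2) ^ (n - 2)
            * (1 - zv) ^ ((n - 4) * (n - 1) + 1) →
      p = 1 ∨ p = -1 :=
  gcd_three_quotients_is_one_general n
end

section
/- For every integer n ≥ 2, every commutative ring R and all units t, a of R, the matrices S_i = I_{i−1} ⊕ [[0,1],[t,0]] ⊕ I_{n−i−1} and T_i = I_{i−1} ⊕ [[0,a^{−1}],[a,0]] ⊕ I_{n−i−1} in M_n(R) (1 ≤ i ≤ n−1) satisfy all the defining relations of the welded braid group WB_n: S_i S_j = S_j S_i and T_i T_j = T_j T_i and S_i T_j = T_j S_i for |i − j| ≥ 2; S_i S_{i+1} S_i = S_{i+1} S_i S_{i+1} and T_i T_{i+1} T_i = T_{i+1} T_i T_{i+1} for 1 ≤ i ≤ n−2; T_i² = I_n for 1 ≤ i ≤ n−1; S_i T_{i+1} T_i = T_{i+1} T_i S_{i+1} and T_i S_{i+1} S_i = S_{i+1} S_i T_{i+1} for 1 ≤ i ≤ n−2. Hence σ_i ↦ S_i,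 τ_i ↦ T_i defines an n-dimensional representation wTYM_n of WB_n. -/
open Matrix

/-- The matrix which is the identity except for the 2×2 block `[[0,x],[y,0]]` occupying rows
and columns `k` and `k+1` (0-based indexing). With `x = 1, y = t` this is the Tong–Yang–Ma
matrix `S_{k+1}`, and with `x = a⁻¹, y = a` it is the matrix `T_{k+1}` (1-based indexing). -/
def twistMat (R : Type) [CommRing R] (n : ℕ) (x y : R) (k : ℕ) : Matrix (Fin n) (Fin n) R :=
  Matrix.of fun p q =>
    if (p : ℕ) = k ∧ (q : ℕ) = k + 1 then x
    else if (p : ℕ) = k + 1 ∧ (q : ℕ) = k then y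
    else if (p : ℕ) = (q : ℕ) ∧ (p : ℕ) ≠ k ∧ (p : ℕ) ≠ k + 1 then 1
    else 0

/-- The defining relators of the welded braid group `WB_{m+1}` on generators
`σ_1, …, σ_m` (the `Sum.inl` generators) and `τ_1, …, τ_m` (the `Sum.inr` generators). -/
def weldedRels (m : ℕ) : Set (FreeGroup (Fin m ⊕ Fin m)) :=
  let σ : Fin m → FreeGroup (Fin m ⊕ Fin m) := fun i => FreeGroup.of (Sum.inl i)
  let τ : Fin m → FreeGroup (Fin m ⊕ Fin m) := fun i => FreeGroup.of (Sum.inr i)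
  {r | (∃ i j : Fin m, ((i : ℕ) + 2 ≤ (j : ℕ) ∨ (j : ℕ) + 2 ≤ (i : ℕ)) ∧
          r = σ i * σ j * (σ i)⁻¹ * (σ j)⁻¹) ∨
       (∃ i j : Fin m, (j : ℕ) = (i : ℕ) + 1 ∧
          r = σ i * σ j * σ i * (σ j)⁻¹ * (σ i)⁻¹ * (σ j)⁻¹) ∨
       (∃ i j : Fin m, ((i : ℕ) + 2 ≤ (j : ℕ) ∨ (j : ℕ) + 2 ≤ (i : ℕ)) ∧
          r = τ i * τ j * (τ i)⁻¹ * (τ j)⁻¹) ∨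
       (∃ i j : Fin m, (j : ℕ) = (i : ℕ) + 1 ∧
          r = τ i * τ j * τ i * (τ j)⁻¹ * (τ i)⁻¹ * (τ j)⁻¹) ∨
       (∃ i : Fin m, r = τ i * τ i) ∨
       (∃ i j : Fin m, ((i : ℕ) + 2 ≤ (j : ℕ) ∨ (j : ℕ) + 2 ≤ (i : ℕ)) ∧
          r = σ i * τ j * (σ i)⁻¹ * (τ j)⁻¹) ∨
       (∃ i j : Fin m, (j : ℕ) = (i : ℕ) + 1 ∧
          r = σ i * τ j * τ i * (τ j * τ i * σ j)⁻¹) ∨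
       (∃ i j : Fin m, (j : ℕ) = (i : ℕ) + 1 ∧
          r = τ i * σ j * σ i * (σ j * σ i * τ j)⁻¹)}

namespace WTYM
def monoF (k p : ℕ) : ℕ := if p = k then k + 1 else if p = k + 1 then k else p
def monoC {R : Type} [CommRing R] (x y : R) (k p : ℕ) : R :=
  if p = k then x else if p = k + 1 then y else 1
def monoMat (R : Type) [CommRing R] (n : ℕ) (f : ℕ → ℕ) (c : ℕ → R) :
    Matrix (Fin n) (Fin n) R :=
  Matrix.of fun p q => if (q : ℕ) = f (p : ℕ) then c (p : ℕ) else 0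
variable {R : Type} [CommRing R] {n : ℕ}
lemma monoF_lt {k : ℕ} (hk : k + 1 < n) : ∀ p, p < n → monoF k p < n := by
  intro p hp; unfold monoF; split_ifs <;> omega
lemma twistMat_eq_mono (x y : R) (k : ℕ) (hk : k + 1 < n) :
    twistMat R n x y k = monoMat R n (monoF k) (monoC x y k) := by
  ext p q
  have hp := p.isLt; have hq := q.isLt
  simp only [twistMat, monoMat, monoF, monoC, Matrix.of_apply]
  split_ifs <;> first | rfl | omega
lemma monoMat_mul (f f' : ℕ → ℕ) (c c' : ℕ → R) (hf : ∀ p, p < n → f p < n) :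
    monoMat R n f c * monoMat R n f' c'
      = monoMat R n (fun p => f' (f p)) (fun p => c p * c' (f p)) := by
  ext p q
  rw [Matrix.mul_apply, Finset.sum_eq_single (⟨f (p : ℕ), hf _ p.isLt⟩ : Fin n)]
  · simp [monoMat, mul_ite]
  · intro r _ hr
    simp only [monoMat, Matrix.of_apply]
    rw [if_neg, zero_mul]
    intro h; exact hr (Fin.ext h)
  · simp
lemma monoMat_congr {f f' : ℕ → ℕ} {c c' : ℕ → R}
    (h : ∀ p, p < n → f p = f' p ∧ c p = c' p) :
    monoMat R n f c = monoMat R n f' c' := by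
  ext p q
  obtain ⟨h1, h2⟩ := h (p : ℕ) p.isLt
  simp [monoMat, h1, h2]
lemma monoMat_one : monoMat R n id (fun _ => (1 : R)) = 1 := by
  ext p q
  simp [monoMat, Matrix.one_apply, Fin.ext_iff, eq_comm]

lemma twist_comm {k l : ℕ} (hl : l + 1 < n) (hkl : k + 2 ≤ l) (x y u v : R) :
    twistMat R n x y k * twistMat R n u v l = twistMat R n u v l * twistMat R n x y k := by
  have hk : k + 1 < n := by omega
  rw [twistMat_eq_mono x y k hk, twistMat_eq_mono u v l hl,
      monoMat_mul _ _ _ _ (monoF_lt hk), monoMat_mul _ _ _ _ (monoF_lt hl)]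
  apply monoMat_congr
  intro p hp
  constructor
  · unfold monoF; split_ifs <;> omega
  · unfold monoC monoF; split_ifs <;> first | ring1 | (exfalso; omega)

lemma twist_braid {k : ℕ} (hk : k + 2 < n)
    (x1 y1 x2 y2 x3 y3 p1 q1 p2 q2 p3 q3 : R)
    (h1 : x1 * x2 = p3 * p1) (h2 : y1 * x3 = p2 * q1) (h3 : y2 * y3 = q2 * q3) :
    twistMat R n x1 y1 k * twistMat R n x2 y2 (k+1) * twistMat R n x3 y3 k
      = twistMat R n p2 q2 (k+1) * twistMat R n p3 q3 k * twistMat R n p1 q1 (k+1) := by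
  have hk1 : k + 1 < n := by omega
  have hk2 : (k+1) + 1 < n := by omega
  rw [twistMat_eq_mono x1 y1 k hk1, twistMat_eq_mono x2 y2 (k+1) hk2,
      twistMat_eq_mono x3 y3 k hk1, twistMat_eq_mono p2 q2 (k+1) hk2,
      twistMat_eq_mono p3 q3 k hk1, twistMat_eq_mono p1 q1 (k+1) hk2,
      monoMat_mul _ _ _ _ (monoF_lt hk1), monoMat_mul _ _ _ _ (monoF_lt hk2),
      monoMat_mul _ _ _ _ (fun p hp => monoF_lt hk2 _ (monoF_lt hk1 p hp)),
      monoMat_mul _ _ _ _ (fun p hp => monoF_lt hk1 _ (monoF_lt hk2 p hp))]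
  apply monoMat_congr
  have fA : monoF k (k+1) = k := by unfold monoF; split_ifs <;> omega
  have fB : monoF (k+1) k = k := by unfold monoF; split_ifs <;> omega
  have fC : monoF k k = k+1 := by unfold monoF; split_ifs <;> omega
  have fD : monoF (k+1) (k+1) = k+2 := by unfold monoF; split_ifs <;> omega
  have fE : monoF k (k+2) = k+2 := by unfold monoF; split_ifs <;> omega
  have fF : monoF (k+1) (k+2) = k+1 := by unfold monoF; split_ifs <;> omega
  have gA : ∀ u v : R, monoC u v k (k+1) = v := by
    intro u v; unfold monoC; split_ifs <;> first | rfl | (exfalso; omega)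
  have gB : ∀ u v : R, monoC u v (k+1) k = 1 := by
    intro u v; unfold monoC; split_ifs <;> first | rfl | (exfalso; omega)
  have gC : ∀ u v : R, monoC u v k k = u := by
    intro u v; unfold monoC; split_ifs <;> first | rfl | (exfalso; omega)
  have gD : ∀ u v : R, monoC u v (k+1) (k+1) = u := by
    intro u v; unfold monoC; split_ifs <;> first | rfl | (exfalso; omega)
  have gE : ∀ u v : R, monoC u v k (k+2) = 1 := by
    intro u v; unfold monoC; split_ifs <;> first | rfl | (exfalso; omega)
  have gF : ∀ u v : R, monoC u v (k+1) (k+2) = v := by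
    intro u v; unfold monoC; split_ifs <;> first | rfl | (exfalso; omega)
  intro p hp
  have tri : p = k ∨ p = k + 1 ∨ p = k + 2 ∨ (p ≠ k ∧ p ≠ k + 1 ∧ p ≠ k + 2) := by omega
  rcases tri with rfl | rfl | rfl | ⟨e1, e2, e3⟩
  · constructor
    · simp only [fA, fB, fC, fD, fE, fF]
    · simp only [fA, fB, fC, fD, fE, fF, gA, gB, gC, gD, gE, gF]
      linear_combination h1
  · constructor
    · simp only [fA, fB, fC, fD, fE, fF]
    · simp only [fA, fB, fC, fD, fE, fF, gA, gB, gC, gD, gE, gF]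
      linear_combination h2
  · constructor
    · simp only [fA, fB, fC, fD, fE, fF]
    · simp only [fA, fB, fC, fD, fE, fF, gA, gB, gC, gD, gE, gF]
      linear_combination h3
  · have fG : monoF k p = p := by unfold monoF; split_ifs <;> omega
    have fH : monoF (k+1) p = p := by unfold monoF; split_ifs <;> omega
    have gG : ∀ u v : R, monoC u v k p = 1 := by
      intro u v; unfold monoC; split_ifs <;> first | rfl | (exfalso; omega)
    have gH : ∀ u v : R, monoC u v (k+1) p = 1 := by
      intro u v; unfold monoC; split_ifs <;> first | rfl | (exfalso; omega)
    constructor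
    · simp only [fG, fH]
    · simp only [fG, fH, gG, gH]

lemma twist_mul_inv {k : ℕ} (hk : k + 1 < n) (x y u v : R)
    (hxv : x * v = 1) (hyu : y * u = 1) :
    twistMat R n x y k * twistMat R n u v k = 1 := by
  rw [twistMat_eq_mono x y k hk, twistMat_eq_mono u v k hk,
      monoMat_mul _ _ _ _ (monoF_lt hk), ← monoMat_one (R := R) (n := n)]
  apply monoMat_congr
  intro p hp
  constructor
  · show monoF k (monoF k p) = p
    unfold monoF; split_ifs <;> omega
  · show monoC x y k p * monoC u v k (monoF k p) = 1
    unfold monoC monoF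
    split_ifs <;>
      first | ring1 | (exfalso; omega) | linear_combination hxv | linear_combination hyu

end WTYM

theorem welded_tym_relations_and_representation (n : ℕ) (hn : 2 ≤ n)
    (R : Type) [CommRing R] (t a : Rˣ) :
    (∀ i j : ℕ, 1 ≤ i → 1 ≤ j → i ≤ n - 1 → j ≤ n - 1 → (i + 2 ≤ j ∨ j + 2 ≤ i) →
        twistMat R n 1 (t : R) (i - 1) * twistMat R n 1 (t : R) (j - 1)
          = twistMat R n 1 (t : R) (j - 1) * twistMat R n 1 (t : R) (i - 1)) ∧
    (∀ i j : ℕ, 1 ≤ i → 1 ≤ j → i ≤ n - 1 → j ≤ n - 1 → (i + 2 ≤ j ∨ j + 2 ≤ i) →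
        twistMat R n ((a⁻¹ : Rˣ) : R) (a : R) (i - 1) * twistMat R n ((a⁻¹ : Rˣ) : R) (a : R) (j - 1)
          = twistMat R n ((a⁻¹ : Rˣ) : R) (a : R) (j - 1) * twistMat R n ((a⁻¹ : Rˣ) : R) (a : R) (i - 1)) ∧
    (∀ i j : ℕ, 1 ≤ i → 1 ≤ j → i ≤ n - 1 → j ≤ n - 1 → (i + 2 ≤ j ∨ j + 2 ≤ i) →
        twistMat R n 1 (t : R) (i - 1) * twistMat R n ((a⁻¹ : Rˣ) : R) (a : R) (j - 1)
          = twistMat R n ((a⁻¹ : Rˣ) : R) (a : R) (j - 1) * twistMat R n 1 (t : R) (i - 1)) ∧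
    (∀ i : ℕ, 1 ≤ i → i ≤ n - 2 →
        twistMat R n 1 (t : R) (i - 1) * twistMat R n 1 (t : R) i * twistMat R n 1 (t : R) (i - 1)
          = twistMat R n 1 (t : R) i * twistMat R n 1 (t : R) (i - 1) * twistMat R n 1 (t : R) i) ∧
    (∀ i : ℕ, 1 ≤ i → i ≤ n - 2 →
        twistMat R n ((a⁻¹ : Rˣ) : R) (a : R) (i - 1) * twistMat R n ((a⁻¹ : Rˣ) : R) (a : R) i
            * twistMat R n ((a⁻¹ : Rˣ) : R) (a : R) (i - 1)
          = twistMat R n ((a⁻¹ : Rˣ) : R) (a : R) i * twistMat R n ((a⁻¹ : Rˣ) : R) (a : R) (i - 1)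
            * twistMat R n ((a⁻¹ : Rˣ) : R) (a : R) i) ∧
    (∀ i : ℕ, 1 ≤ i → i ≤ n - 1 →
        twistMat R n ((a⁻¹ : Rˣ) : R) (a : R) (i - 1) * twistMat R n ((a⁻¹ : Rˣ) : R) (a : R) (i - 1)
          = 1) ∧
    (∀ i : ℕ, 1 ≤ i → i ≤ n - 2 →
        twistMat R n 1 (t : R) (i - 1) * twistMat R n ((a⁻¹ : Rˣ) : R) (a : R) i
            * twistMat R n ((a⁻¹ : Rˣ) : R) (a : R) (i - 1)
          = twistMat R n ((a⁻¹ : Rˣ) : R) (a : R) i * twistMat R n ((a⁻¹ : Rˣ) : R) (a : R) (i - 1)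
            * twistMat R n 1 (t : R) i) ∧
    (∀ i : ℕ, 1 ≤ i → i ≤ n - 2 →
        twistMat R n ((a⁻¹ : Rˣ) : R) (a : R) (i - 1) * twistMat R n 1 (t : R) i
            * twistMat R n 1 (t : R) (i - 1)
          = twistMat R n 1 (t : R) i * twistMat R n 1 (t : R) (i - 1)
            * twistMat R n ((a⁻¹ : Rˣ) : R) (a : R) i) ∧
    (∃ φ : PresentedGroup (weldedRels (n - 1)) →* Matrix.GeneralLinearGroup (Fin n) R,
      ∀ i : Fin (n - 1),
        ((φ (PresentedGroup.of (Sum.inl i)) : Matrix (Fin n) (Fin n) R)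
            = twistMat R n 1 (t : R) (i : ℕ)) ∧
        ((φ (PresentedGroup.of (Sum.inr i)) : Matrix (Fin n) (Fin n) R)
            = twistMat R n ((a⁻¹ : Rˣ) : R) (a : R) (i : ℕ))) := by
  classical
  have hb2 : ∀ k : ℕ, k + 1 < n → True := fun _ _ => trivial
  refine ⟨?_, ?_, ?_, ?_, ?_, ?_, ?_, ?_, ?_⟩
  · intro i j hi hj hin hjn hij
    rcases hij with hij | hij
    · exact WTYM.twist_comm (by omega) (by omega) _ _ _ _
    · exact (WTYM.twist_comm (by omega) (by omega) _ _ _ _).symm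
  · intro i j hi hj hin hjn hij
    rcases hij with hij | hij
    · exact WTYM.twist_comm (by omega) (by omega) _ _ _ _
    · exact (WTYM.twist_comm (by omega) (by omega) _ _ _ _).symm
  · intro i j hi hj hin hjn hij
    rcases hij with hij | hij
    · exact WTYM.twist_comm (by omega) (by omega) _ _ _ _
    · exact (WTYM.twist_comm (by omega) (by omega) _ _ _ _).symm
  · intro i hi hin
    obtain ⟨k, rfl⟩ : ∃ k, i = k + 1 := ⟨i - 1, by omega⟩
    simp only [Nat.add_sub_cancel]
    exact WTYM.twist_braid (by omega) _ _ _ _ _ _ _ _ _ _ _ _ (by ring) (by ring) (by ring)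
  · intro i hi hin
    obtain ⟨k, rfl⟩ : ∃ k, i = k + 1 := ⟨i - 1, by omega⟩
    simp only [Nat.add_sub_cancel]
    exact WTYM.twist_braid (by omega) _ _ _ _ _ _ _ _ _ _ _ _ (by ring) (by ring) (by ring)
  · intro i hi hin
    exact WTYM.twist_mul_inv (by omega) _ _ _ _ (by simp) (by simp)
  · intro i hi hin
    obtain ⟨k, rfl⟩ : ∃ k, i = k + 1 := ⟨i - 1, by omega⟩
    simp only [Nat.add_sub_cancel]
    exact WTYM.twist_braid (by omega) _ _ _ _ _ _ _ _ _ _ _ _ (by ring) (by ring) (by ring)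
  · intro i hi hin
    obtain ⟨k, rfl⟩ : ∃ k, i = k + 1 := ⟨i - 1, by omega⟩
    simp only [Nat.add_sub_cancel]
    exact WTYM.twist_braid (by omega) _ _ _ _ _ _ _ _ _ _ _ _ (by ring) (by ring) (by ring)
  · -- the representation
    have hlt : ∀ i : Fin (n-1), (i : ℕ) + 1 < n := fun i => by have := i.isLt; omega
    let S : Fin (n-1) → Matrix.GeneralLinearGroup (Fin n) R := fun i =>
      ⟨twistMat R n 1 (t : R) i, twistMat R n ((t⁻¹ : Rˣ) : R) 1 i,
        WTYM.twist_mul_inv (hlt i) _ _ _ _ (by simp) (by simp),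
        WTYM.twist_mul_inv (hlt i) _ _ _ _ (by simp) (by simp)⟩
    let T : Fin (n-1) → Matrix.GeneralLinearGroup (Fin n) R := fun i =>
      ⟨twistMat R n ((a⁻¹ : Rˣ) : R) (a : R) i, twistMat R n ((a⁻¹ : Rˣ) : R) (a : R) i,
        WTYM.twist_mul_inv (hlt i) _ _ _ _ (by simp) (by simp),
        WTYM.twist_mul_inv (hlt i) _ _ _ _ (by simp) (by simp)⟩
    have hSval : ∀ i, (S i : Matrix (Fin n) (Fin n) R) = twistMat R n 1 (t : R) i :=
      fun i => rfl
    have hTval : ∀ i, (T i : Matrix (Fin n) (Fin n) R)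
        = twistMat R n ((a⁻¹ : Rˣ) : R) (a : R) i := fun i => rfl
    have hSS : ∀ i j : Fin (n-1), ((i : ℕ) + 2 ≤ (j : ℕ) ∨ (j : ℕ) + 2 ≤ (i : ℕ)) →
        S i * S j = S j * S i := by
      intro i j hij
      refine Units.ext ?_
      rw [Units.val_mul, Units.val_mul, hSval, hSval]
      rcases hij with hij | hij
      · exact WTYM.twist_comm (hlt j) hij _ _ _ _
      · exact (WTYM.twist_comm (hlt i) hij _ _ _ _).symm
    have hTT : ∀ i j : Fin (n-1), ((i : ℕ) + 2 ≤ (j : ℕ) ∨ (j : ℕ) + 2 ≤ (i : ℕ)) →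
        T i * T j = T j * T i := by
      intro i j hij
      refine Units.ext ?_
      rw [Units.val_mul, Units.val_mul, hTval, hTval]
      rcases hij with hij | hij
      · exact WTYM.twist_comm (hlt j) hij _ _ _ _
      · exact (WTYM.twist_comm (hlt i) hij _ _ _ _).symm
    have hST : ∀ i j : Fin (n-1), ((i : ℕ) + 2 ≤ (j : ℕ) ∨ (j : ℕ) + 2 ≤ (i : ℕ)) →
        S i * T j = T j * S i := by
      intro i j hij
      refine Units.ext ?_
      rw [Units.val_mul, Units.val_mul, hSval, hTval]
      rcases hij with hij | hij
      · exact WTYM.twist_comm (hlt j) hij _ _ _ _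
      · exact (WTYM.twist_comm (hlt i) hij _ _ _ _).symm
    have hk2 : ∀ i j : Fin (n-1), (j : ℕ) = (i : ℕ) + 1 → (i : ℕ) + 2 < n := by
      intro i j hij; have := j.isLt; omega
    have hSbr : ∀ i j : Fin (n-1), (j : ℕ) = (i : ℕ) + 1 →
        S i * S j * S i = S j * S i * S j := by
      intro i j hij
      refine Units.ext ?_
      simp only [Units.val_mul, hSval, hij]
      exact WTYM.twist_braid (hk2 i j hij) _ _ _ _ _ _ _ _ _ _ _ _
        (by ring) (by ring) (by ring)
    have hTbr : ∀ i j : Fin (n-1), (j : ℕ) = (i : ℕ) + 1 →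
        T i * T j * T i = T j * T i * T j := by
      intro i j hij
      refine Units.ext ?_
      simp only [Units.val_mul, hTval, hij]
      exact WTYM.twist_braid (hk2 i j hij) _ _ _ _ _ _ _ _ _ _ _ _
        (by ring) (by ring) (by ring)
    have hT2 : ∀ i : Fin (n-1), T i * T i = 1 := by
      intro i
      refine Units.ext ?_
      rw [Units.val_mul, Units.val_one, hTval]
      exact WTYM.twist_mul_inv (hlt i) _ _ _ _ (by simp) (by simp)
    have hSTT : ∀ i j : Fin (n-1), (j : ℕ) = (i : ℕ) + 1 →
        S i * T j * T i = T j * T i * S j := by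
      intro i j hij
      refine Units.ext ?_
      simp only [Units.val_mul, hSval, hTval, hij]
      exact WTYM.twist_braid (hk2 i j hij) _ _ _ _ _ _ _ _ _ _ _ _
        (by ring) (by ring) (by ring)
    have hTSS : ∀ i j : Fin (n-1), (j : ℕ) = (i : ℕ) + 1 →
        T i * S j * S i = S j * S i * T j := by
      intro i j hij
      refine Units.ext ?_
      simp only [Units.val_mul, hSval, hTval, hij]
      exact WTYM.twist_braid (hk2 i j hij) _ _ _ _ _ _ _ _ _ _ _ _
        (by ring) (by ring) (by ring)
    have hf : ∀ r ∈ weldedRels (n-1),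
        FreeGroup.lift (Sum.elim S T) r = 1 := by
      intro r hr
      simp only [weldedRels, Set.mem_setOf_eq] at hr
      obtain h | h | h | h | h | h | h | h := hr
      · obtain ⟨i, j, hij, rfl⟩ := h
        simp only [_root_.map_mul, _root_.map_inv, FreeGroup.lift_apply_of, Sum.elim_inl]
        rw [hSS i j hij]
        group
      · obtain ⟨i, j, hij, rfl⟩ := h
        simp only [_root_.map_mul, _root_.map_inv, FreeGroup.lift_apply_of, Sum.elim_inl]
        rw [hSbr i j hij]
        group
      · obtain ⟨i, j, hij, rfl⟩ := h
        simp only [_root_.map_mul, _root_.map_inv, FreeGroup.lift_apply_of, Sum.elim_inr]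
        rw [hTT i j hij]
        group
      · obtain ⟨i, j, hij, rfl⟩ := h
        simp only [_root_.map_mul, _root_.map_inv, FreeGroup.lift_apply_of, Sum.elim_inr]
        rw [hTbr i j hij]
        group
      · obtain ⟨i, rfl⟩ := h
        simp only [_root_.map_mul, FreeGroup.lift_apply_of, Sum.elim_inr]
        exact hT2 i
      · obtain ⟨i, j, hij, rfl⟩ := h
        simp only [_root_.map_mul, _root_.map_inv, FreeGroup.lift_apply_of, Sum.elim_inl, Sum.elim_inr]
        rw [hST i j hij]
        group
      · obtain ⟨i, j, hij, rfl⟩ := h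
        simp only [_root_.map_mul, _root_.map_inv, FreeGroup.lift_apply_of, Sum.elim_inl, Sum.elim_inr]
        exact mul_inv_eq_one.2 (hSTT i j hij)
      · obtain ⟨i, j, hij, rfl⟩ := h
        simp only [_root_.map_mul, _root_.map_inv, FreeGroup.lift_apply_of, Sum.elim_inl, Sum.elim_inr]
        exact mul_inv_eq_one.2 (hTSS i j hij)
    refine ⟨PresentedGroup.toGroup hf, fun i => ⟨?_, ?_⟩⟩
    · rw [PresentedGroup.toGroup.of]
      exact hSval i
    · rw [PresentedGroup.toGroup.of]
      exact hTval i
end
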